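/- Let (Φ_n,{Π_i}_{i∈Φ_n}) be a finite t-stability on D and, for each i ∈ Φ_n, let (I_i,{P_ψ}_{ψ∈I_i}) be a finite t-stability on the triangulated subcategory Π_i. Let Ψ = ⋃_{i∈Φ_n} I_i, linearly ordered so that each I_i retains its order and ψ_2 > ψ_1 whenever ψ_1 ∈ I_{i_1} and ψ_2 ∈ I_{i_2} with i_2 > i_1. Then (Ψ,{P_ψ}_{ψ∈Ψ}) with τ_Ψ = id is a finite t-stability on D, and it is finer than (Φ_n,{Π_i}_{i∈Φ_n}). -/

import Mathlib

/-!
Common infrastructure for formalizing semi-orthogonal decompositions (SODs),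
t-stabilities, admissible filtrations, mutations, Serre functors, exceptional
sequences and Verdier quotients, following the paper
"Semi-orthogonal decompositions via t-stabilities".

Full triangulated subcategories of `D` closed under extensions, direct summands
and shifts are modelled as subsets of objects `T : Set D` satisfying the
closure predicate `IsTriangClosed`.  All notions are stated relative to an
ambient such subcategory `amb : Set D` (take `amb = Set.univ` for `D` itself).
-/

open CategoryTheory Limits Pretriangulated ZeroObject

universe w v u v₂ u₂

namespace SODPaper

variable {D : Type u} [Category.{v} D] [Preadditive D] [HasZeroObject D]
  [HasShift D ℤ] [∀ n : ℤ, (CategoryTheory.shiftFunctor D n).Additive]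
  [Pretriangulated D]

/-- The closure conditions satisfied by a strictly full triangulated subcategory of `D`
closed under extensions, direct summands and shifts. -/
structure IsTriangClosed (T : Set D) : Prop where
  zero_mem : (0 : D) ∈ T
  iso_mem : ∀ {X Y : D}, (X ≅ Y) → X ∈ T → Y ∈ T
  shift_mem : ∀ X ∈ T, ∀ n : ℤ, X⟦n⟧ ∈ T
  ext_mem : ∀ T' ∈ distTriang D, T'.obj₁ ∈ T → T'.obj₃ ∈ T → T'.obj₂ ∈ T
  summand_mem : ∀ {X Y : D} (s : Y ⟶ X) (r : X ⟶ Y), s ≫ r = 𝟙 Y → X ∈ T → Y ∈ T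

/-- `⟨S⟩`: the smallest full triangulated subcategory of `D` containing `S` and closed
under extensions, direct summands and shifts. -/
def gen (S : Set D) : Set D := ⋂₀ {T : Set D | IsTriangClosed T ∧ S ⊆ T}

/-- `Hom(A, B) = 0`. -/
def homOrth (A B : Set D) : Prop := ∀ X ∈ A, ∀ Y ∈ B, ∀ f : X ⟶ Y, f = 0

/-- The right orthogonal `B^⊥ = {X : Hom(B, X) = 0}` (inside all of `D`). -/
def rOrth (B : Set D) : Set D := {X : D | ∀ Y ∈ B, ∀ f : Y ⟶ X, f = 0}

/-- The left orthogonal `^⊥B = {X : Hom(X, B) = 0}` (inside all of `D`). -/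
def lOrth (B : Set D) : Set D := {X : D | ∀ Y ∈ B, ∀ f : X ⟶ Y, f = 0}

/-- `A` is a right admissible subcategory of the (full) subcategory with objects `T`:
the inclusion functor admits a right adjoint (i.e. it is a left adjoint). -/
def RightAdmissibleIn (A T : Set D) : Prop :=
  ∃ h : ∀ ⦃X : D⦄, X ∈ A → X ∈ T, (ObjectProperty.ιOfLE (P := fun X => X ∈ A) (P' := fun X => X ∈ T) h).IsLeftAdjoint

/-- `A` is a left admissible subcategory of the (full) subcategory with objects `T`:
the inclusion functor admits a left adjoint (i.e. it is a right adjoint). -/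
def LeftAdmissibleIn (A T : Set D) : Prop :=
  ∃ h : ∀ ⦃X : D⦄, X ∈ A → X ∈ T, (ObjectProperty.ιOfLE (P := fun X => X ∈ A) (P' := fun X => X ∈ T) h).IsRightAdjoint

/-- `A` is an admissible subcategory of the subcategory with objects `T`. -/
def AdmissibleIn (A T : Set D) : Prop := RightAdmissibleIn A T ∧ LeftAdmissibleIn A T

/-- A semi-orthogonal decomposition `(P 0, …, P (n-1))` of the triangulated subcategory
with objects `amb` (take `amb = Set.univ` for an SOD of `D`). -/
structure IsSODIn (amb : Set D) {n : ℕ} (P : Fin n → Set D) : Prop where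
  subset : ∀ i, P i ⊆ amb
  closed : ∀ i, IsTriangClosed (P i)
  nonzero : ∀ i, ∃ X ∈ P i, ¬ IsZero X
  orth : ∀ i j : Fin n, i < j → homOrth (P j) (P i)
  generates : gen (⋃ i, P i) = amb

/-- A semi-orthogonal decomposition of `D`. -/
def IsSOD {n : ℕ} (P : Fin n → Set D) : Prop := IsSODIn Set.univ P

/-- An admissible SOD: each term is admissible in the ambient subcategory. -/
def IsAdmissibleSODIn (amb : Set D) {n : ℕ} (P : Fin n → Set D) : Prop :=
  IsSODIn amb P ∧ ∀ i, AdmissibleIn (P i) amb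

/-- The right mutation `ρ` of an SOD at the (0-based) position `i`:
the pair `(P i, P (i+1))` is replaced by `(P i ^⊥ ∩ ⟨P i, P (i+1)⟩, P i)`. -/
def rightMut (amb : Set D) {n : ℕ} (P : Fin n → Set D) (i : ℕ) (hi : i + 1 < n) :
    Fin n → Set D :=
  fun k =>
    if k = (⟨i, Nat.lt_of_succ_lt hi⟩ : Fin n) then
      rOrth (P ⟨i, Nat.lt_of_succ_lt hi⟩) ∩
        gen (P ⟨i, Nat.lt_of_succ_lt hi⟩ ∪ P ⟨i + 1, hi⟩) ∩ amb
    else if k = (⟨i + 1, hi⟩ : Fin n) then P ⟨i, Nat.lt_of_succ_lt hi⟩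
    else P k

/-- The left mutation `ρ̌` of an SOD at the (0-based) position `i`:
the pair `(P i, P (i+1))` is replaced by `(P (i+1), ^⊥(P (i+1)) ∩ ⟨P i, P (i+1)⟩)`. -/
def leftMut (amb : Set D) {n : ℕ} (P : Fin n → Set D) (i : ℕ) (hi : i + 1 < n) :
    Fin n → Set D :=
  fun k =>
    if k = (⟨i, Nat.lt_of_succ_lt hi⟩ : Fin n) then P ⟨i + 1, hi⟩
    else if k = (⟨i + 1, hi⟩ : Fin n) then
      lOrth (P ⟨i + 1, hi⟩) ∩
        gen (P ⟨i, Nat.lt_of_succ_lt hi⟩ ∪ P ⟨i + 1, hi⟩) ∩ amb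
    else P k

/-- All iterated right and left mutations of an SOD. -/
inductive MutClosure (amb : Set D) {n : ℕ} : (Fin n → Set D) → (Fin n → Set D) → Prop
  | refl (P : Fin n → Set D) : MutClosure amb P P
  | right {P P' : Fin n → Set D} (h : MutClosure amb P P') (i : ℕ) (hi : i + 1 < n) :
      MutClosure amb P (rightMut amb P' i hi)
  | left {P P' : Fin n → Set D} (h : MutClosure amb P P') (i : ℕ) (hi : i + 1 < n) :
      MutClosure amb P (leftMut amb P' i hi)

/-- An `∞`-admissible SOD: all of its iterated right and left mutations (including
itself) are admissible SODs. -/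
def IsInftyAdmissibleSODIn (amb : Set D) {n : ℕ} (P : Fin n → Set D) : Prop :=
  IsSODIn amb P ∧ ∀ P' : Fin n → Set D, MutClosure amb P P' → IsAdmissibleSODIn amb P'

/-- `P` is finer than `Q` (for linearly ordered families of subcategories: SODs or
finite t-stabilities): `Q` is obtained from `P` by grouping consecutive terms via a
surjective monotone map of index sets and taking generated subcategories. -/
def Finer {Φ : Type*} {Ψ : Type*} [LinearOrder Φ] [LinearOrder Ψ]
    (P : Φ → Set D) (Q : Ψ → Set D) : Prop :=
  ∃ r : Φ → Ψ, Function.Surjective r ∧ Monotone r ∧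
    ∀ ψ : Ψ, Q ψ = gen (⋃ φ ∈ {φ : Φ | r φ = ψ}, P φ)

/-- A finest SOD of `amb`: an SOD which is minimal for the `Finer` preorder, i.e.
every SOD which is finer than it is equivalent to it. -/
def IsFinestSODIn (amb : Set D) {n : ℕ} (P : Fin n → Set D) : Prop :=
  IsSODIn amb P ∧ ∀ (m : ℕ) (Q : Fin m → Set D), IsSODIn amb Q → Finer Q P → Finer P Q

/-- A finest `∞`-admissible SOD. -/
def IsFinestInftyAdmissibleSODIn (amb : Set D) {n : ℕ} (P : Fin n → Set D) : Prop :=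
  IsInftyAdmissibleSODIn amb P ∧ IsFinestSODIn amb P

/-- All iterated right and left orthogonals of a subcategory (inside `amb`). -/
inductive OrthClosure (amb : Set D) : Set D → Set D → Prop
  | refl (A : Set D) : OrthClosure amb A A
  | right {A B : Set D} (h : OrthClosure amb A B) : OrthClosure amb A (rOrth B ∩ amb)
  | left {A B : Set D} (h : OrthClosure amb A B) : OrthClosure amb A (lOrth B ∩ amb)

/-- An `∞`-admissible subcategory: all of its iterated right and left orthogonals
are admissible. -/
def IsInftyAdmissibleSubcat (amb A : Set D) : Prop :=
  ∀ B : Set D, OrthClosure amb A B → AdmissibleIn B amb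

/-- `𝒜(amb)`: the set of finest `∞`-admissible subcategories of `amb`, i.e. the
`∞`-admissible subcategories occurring as a term of some finest `∞`-admissible SOD. -/
def scriptA (amb : Set D) : Set (Set D) :=
  {A : Set D | IsInftyAdmissibleSubcat amb A ∧
    ∃ (n : ℕ) (P : Fin n → Set D) (i : Fin n),
      IsFinestInftyAdmissibleSODIn amb P ∧ P i = A}

/-- A finite filtration `0 = T 0 ⊊ T 1 ⊊ ⋯ ⊊ T n = amb` by full triangulated
subcategories. -/
structure IsFilt (amb : Set D) {n : ℕ} (T : Fin (n + 1) → Set D) : Prop where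
  closed : ∀ j, IsTriangClosed (T j)
  bot : T 0 = {X : D | IsZero X}
  top : T (Fin.last n) = amb
  strict : ∀ j : Fin n, T j.castSucc ⊂ T j.succ

/-- A finite right admissible filtration: `T i` is right admissible in `T (i+1)`
for `1 ≤ i ≤ n - 1`. -/
def IsRightAdmFilt (amb : Set D) {n : ℕ} (T : Fin (n + 1) → Set D) : Prop :=
  IsFilt amb T ∧ ∀ j : Fin n, 1 ≤ (j : ℕ) → RightAdmissibleIn (T j.castSucc) (T j.succ)

/-- A finite left admissible filtration. -/
def IsLeftAdmFilt (amb : Set D) {n : ℕ} (T : Fin (n + 1) → Set D) : Prop :=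
  IsFilt amb T ∧ ∀ j : Fin n, 1 ≤ (j : ℕ) → LeftAdmissibleIn (T j.castSucc) (T j.succ)

/-- A finite strongly admissible (s-admissible) filtration: a right admissible
filtration such that moreover each `T i ^⊥ ∩ T (i+1)` is admissible in `amb`. -/
def IsSAdmFilt (amb : Set D) {n : ℕ} (T : Fin (n + 1) → Set D) : Prop :=
  IsRightAdmFilt amb T ∧
    ∀ j : Fin n, 1 ≤ (j : ℕ) → AdmissibleIn (rOrth (T j.castSucc) ∩ T j.succ) amb

/-- The right mutation `σ` of a finite filtration at position `p` (`1 ≤ p ≤ n - 1`):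
`T p` is replaced by `⟨T p ^⊥ ∩ T (p+1), T (p-1)⟩`. -/
def filtRightMut (amb : Set D) {n : ℕ} (T : Fin (n + 1) → Set D) (p : ℕ)
    (hp1 : 1 ≤ p) (hp2 : p < n) : Fin (n + 1) → Set D :=
  fun k =>
    if k = (⟨p, by omega⟩ : Fin (n + 1)) then
      gen ((rOrth (T ⟨p, by omega⟩) ∩ T ⟨p + 1, by omega⟩ ∩ amb) ∪ T ⟨p - 1, by omega⟩)
    else T k

/-- The left mutation `σ̌` of a finite filtration at position `p`, defined dually to
`filtRightMut`: `T p` is replaced by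
`⟨T (p-1), ^⊥(T (p-1) ^⊥ ∩ T p) ∩ T (p-1) ^⊥ ∩ T (p+1)⟩` (this is the formula obtained
by transporting the left mutation of SODs through the correspondence `ξ`). -/
def filtLeftMut (amb : Set D) {n : ℕ} (T : Fin (n + 1) → Set D) (p : ℕ)
    (hp1 : 1 ≤ p) (hp2 : p < n) : Fin (n + 1) → Set D :=
  fun k =>
    if k = (⟨p, by omega⟩ : Fin (n + 1)) then
      gen (T ⟨p - 1, by omega⟩ ∪
        (lOrth (rOrth (T ⟨p - 1, by omega⟩) ∩ T ⟨p, by omega⟩) ∩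
          rOrth (T ⟨p - 1, by omega⟩) ∩ T ⟨p + 1, by omega⟩ ∩ amb))
    else T k

/-- All iterated right and left mutations of a finite filtration. -/
inductive FiltMutClosure (amb : Set D) {n : ℕ} :
    (Fin (n + 1) → Set D) → (Fin (n + 1) → Set D) → Prop
  | refl (T : Fin (n + 1) → Set D) : FiltMutClosure amb T T
  | right {T T' : Fin (n + 1) → Set D} (h : FiltMutClosure amb T T') (p : ℕ)
      (hp1 : 1 ≤ p) (hp2 : p < n) : FiltMutClosure amb T (filtRightMut amb T' p hp1 hp2)
  | left {T T' : Fin (n + 1) → Set D} (h : FiltMutClosure amb T T') (p : ℕ)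
      (hp1 : 1 ≤ p) (hp2 : p < n) : FiltMutClosure amb T (filtLeftMut amb T' p hp1 hp2)

/-- An `∞`-s-admissible filtration: all of its iterated right and left mutations
(including itself) are s-admissible. -/
def IsInftySAdmFilt (amb : Set D) {n : ℕ} (T : Fin (n + 1) → Set D) : Prop :=
  IsFilt amb T ∧ ∀ T' : Fin (n + 1) → Set D, FiltMutClosure amb T T' → IsSAdmFilt amb T'

/-- The filtration `X` is finer than the filtration `Y`. -/
def FinerFilt {n m : ℕ} (X : Fin (n + 1) → Set D) (Y : Fin (m + 1) → Set D) : Prop :=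
  ∃ r : Fin n → Fin m, Function.Surjective r ∧ Monotone r ∧
    ∀ j : Fin m, Y j.succ = gen (⋃ i ∈ {i : Fin n | r i = j}, X i.succ)

/-- A finest filtration: minimal among right admissible filtrations for the
partial order `FinerFilt`. -/
def IsFinestFilt (amb : Set D) {n : ℕ} (T : Fin (n + 1) → Set D) : Prop :=
  ∀ (m : ℕ) (T' : Fin (m + 1) → Set D), IsRightAdmFilt amb T' → FinerFilt T' T →
    FinerFilt T T'

/-- A finite finest `∞`-s-admissible filtration. -/
def IsFinestInftySAdmFilt (amb : Set D) {n : ℕ} (T : Fin (n + 1) → Set D) : Prop :=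
  IsInftySAdmFilt amb T ∧ IsFinestFilt amb T

/-- The map `ξ` sending an SOD `(P 0, …, P (n-1))` to the filtration
`T j = ⟨P i : i + j ≥ n⟩ = P_{≥ n - j + 1}` (in the 1-based numbering of the paper). -/
def xi {n : ℕ} (P : Fin n → Set D) : Fin (n + 1) → Set D :=
  fun j => gen (⋃ i ∈ {i : Fin n | n ≤ (i : ℕ) + (j : ℕ)}, P i)

/-- The conditions for a semistable subcategory of a t-stability: a strictly full,
extension-closed, nonzero subcategory. -/
structure IsSemistableClass (A : Set D) : Prop where
  iso_mem : ∀ {X Y : D}, (X ≅ Y) → X ∈ A → Y ∈ A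
  ext_mem : ∀ T' ∈ distTriang D, T'.obj₁ ∈ A → T'.obj₃ ∈ A → T'.obj₂ ∈ A
  nonzero : ∃ X ∈ A, ¬ IsZero X

/-- `X` admits a Harder–Narasimhan filtration with respect to the family `P`:
a finite tower of triangles `0 = Y n → Y (n-1) → ⋯ → Y 1 → Y 0 = X` whose successive
cones are nonzero, semistable, with strictly decreasing phases (the phase of the cone
attached to `Y (i+1) → Y i` being `idx i`, so that `idx` is strictly monotone). -/
def HasHNFiltration {Φ : Type w} [LinearOrder Φ] (P : Φ → Set D) (X : D) : Prop :=
  ∃ (n : ℕ) (Y : Fin (n + 1) → D) (idx : Fin n → Φ),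
    Y 0 = X ∧ IsZero (Y (Fin.last n)) ∧ StrictMono idx ∧
    ∀ i : Fin n, ∃ (A : D) (f : Y i.succ ⟶ Y i.castSucc) (g : Y i.castSucc ⟶ A)
      (h : A ⟶ (Y i.succ)⟦(1 : ℤ)⟧),
      Triangle.mk f g h ∈ (distTriang D) ∧ A ∈ P (idx i) ∧ ¬ IsZero A

/-- A t-stability with trivial shift action `τ = id` on the linearly ordered index set
`Φ`, on the triangulated subcategory of `D` with objects `amb`.  (By the paper's
remark, every *finite* t-stability automatically has `τ = id`, so for finite `Φ` this
is exactly the notion of a (local) finite t-stability.) -/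
structure IsTStabOn (amb : Set D) {Φ : Type w} [LinearOrder Φ] (P : Φ → Set D) : Prop where
  subset : ∀ φ, P φ ⊆ amb
  semistable : ∀ φ, IsSemistableClass (P φ)
  shiftInv : ∀ φ (X : D), X ∈ P φ ↔ X⟦(1 : ℤ)⟧ ∈ P φ
  hom : ∀ φ' φ'' : Φ, φ'' < φ' → ∀ X ∈ P φ', ∀ Y ∈ P φ'', ∀ l : ℤ, l ≤ 0 →
    ∀ f : X ⟶ Y⟦l⟧, f = 0
  hn : ∀ X ∈ amb, ¬ IsZero X → HasHNFiltration P X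

/-- A finite t-stability on `D`, presented (up to equivalence) on the linearly ordered
index set `Φ_n = Fin n`. -/
def IsFiniteTStab {n : ℕ} (P : Fin n → Set D) : Prop :=
  IsTStabOn Set.univ P

/-- A finite finest t-stability: minimal for the `Finer` partial order among finite
t-stabilities. -/
def IsFinestTStab {n : ℕ} (P : Fin n → Set D) : Prop :=
  IsFiniteTStab P ∧ ∀ (m : ℕ) (Q : Fin m → Set D), IsFiniteTStab Q → Finer Q P → Finer P Q

section Linear

variable (𝕜 : Type w) [Field 𝕜] [Linear 𝕜 D]

/-- A Serre functor on the `𝕜`-linear triangulated category `D`: a triangulated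
auto-equivalence `S` together with isomorphisms `Hom(A, B) ≅ Hom(B, S A)^*`,
natural in `A` and `B`. -/
structure SerreFunctor where
  functor : D ⥤ D
  equivalence : functor.IsEquivalence
  commShift : functor.CommShift ℤ
  isTriangulated : letI := commShift; functor.IsTriangulated
  pairing : ∀ A B : D, (A ⟶ B) ≃ₗ[𝕜] ((B ⟶ functor.obj A) →ₗ[𝕜] 𝕜)
  natural_left : ∀ {A A' B : D} (f : A' ⟶ A) (h : A ⟶ B) (u : B ⟶ functor.obj A'),
    pairing A' B (f ≫ h) u = pairing A B h (u ≫ functor.map f)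
  natural_right : ∀ {A B B' : D} (h : A ⟶ B) (g : B ⟶ B') (u : B' ⟶ functor.obj A),
    pairing A B' (h ≫ g) u = pairing A B h (g ≫ u)

/-- An exceptional object: `Hom(E, E) = 𝕜` and `Hom(E, E[l]) = 0` for `l ≠ 0`. -/
def IsExceptional (E : D) : Prop :=
  Function.Bijective (fun c : 𝕜 => c • (𝟙 E)) ∧
    ∀ l : ℤ, l ≠ 0 → ∀ f : E ⟶ E⟦l⟧, f = 0

/-- An exceptional sequence `(E 0, …, E (n-1))`. -/
def IsExcSeq {n : ℕ} (E : Fin n → D) : Prop :=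
  (∀ i, IsExceptional 𝕜 (E i)) ∧
    ∀ i j : Fin n, i < j → ∀ l : ℤ, ∀ f : E j ⟶ (E i)⟦l⟧, f = 0

/-- A full exceptional sequence. -/
def IsFullExcSeq {n : ℕ} (E : Fin n → D) : Prop :=
  IsExcSeq 𝕜 E ∧ gen (Set.range E) = Set.univ

end Linear

/-- `L` is a left mutation `L_E F` of the exceptional pair `(E, F)`: there is a
distinguished triangle `L ⟶ M ⟶ F ⟶ L[1]` in which `M ∈ ⟨E⟩` plays the role of
`Hom^•(E, F) ⊗ E` (for an exceptional pair this is équivalent to the universal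
evaluation triangle, since in addition `Hom^•(E, L) = 0`). -/
def IsLeftMutObj (E F L : D) : Prop :=
  (∀ l : ℤ, ∀ φ : E ⟶ L⟦l⟧, φ = 0) ∧
    ∃ (M : D) (f : L ⟶ M) (g : M ⟶ F) (h : F ⟶ L⟦(1 : ℤ)⟧),
      Triangle.mk f g h ∈ (distTriang D) ∧ M ∈ gen {E}

/-- `R` is a right mutation `R_F E` of the exceptional pair `(E, F)`, dually to
`IsLeftMutObj`: there is a distinguished triangle `E ⟶ M ⟶ R ⟶ E[1]` with
`M ∈ ⟨F⟩` playing the role of `Hom^•(E, F)^* ⊗ F`, and `Hom^•(R, F) = 0`. -/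
def IsRightMutObj (E F R : D) : Prop :=
  (∀ l : ℤ, ∀ φ : R ⟶ F⟦l⟧, φ = 0) ∧
    ∃ (M : D) (f : E ⟶ M) (g : M ⟶ R) (h : R ⟶ E⟦(1 : ℤ)⟧),
      Triangle.mk f g h ∈ (distTriang D) ∧ M ∈ gen {F}

/-- `E'` is the left mutation `L_i E` of the exceptional sequence `E` at the
(0-based) position `i`. -/
def SeqLeftMut {n : ℕ} (E E' : Fin n → D) (i : ℕ) (hi : i + 1 < n) : Prop :=
  IsLeftMutObj (E ⟨i, Nat.lt_of_succ_lt hi⟩) (E ⟨i + 1, hi⟩) (E' ⟨i, Nat.lt_of_succ_lt hi⟩) ∧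
    E' ⟨i + 1, hi⟩ = E ⟨i, Nat.lt_of_succ_lt hi⟩ ∧
    ∀ k : Fin n, k ≠ ⟨i, Nat.lt_of_succ_lt hi⟩ → k ≠ ⟨i + 1, hi⟩ → E' k = E k

/-- `E'` is the right mutation `R_i E` of the exceptional sequence `E` at the
(0-based) position `i`. -/
def SeqRightMut {n : ℕ} (E E' : Fin n → D) (i : ℕ) (hi : i + 1 < n) : Prop :=
  IsRightMutObj (E ⟨i, Nat.lt_of_succ_lt hi⟩) (E ⟨i + 1, hi⟩) (E' ⟨i + 1, hi⟩) ∧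
    E' ⟨i, Nat.lt_of_succ_lt hi⟩ = E ⟨i + 1, hi⟩ ∧
    ∀ k : Fin n, k ≠ ⟨i, Nat.lt_of_succ_lt hi⟩ → k ≠ ⟨i + 1, hi⟩ → E' k = E k

/-- The class of morphisms of `D` whose cone lies in `U`; the Verdier quotient
`D/U` is the localization of `D` at this class. -/
def coneIn (U : Set D) : MorphismProperty D :=
  fun X _ f => ∃ (Z : D) (g : _ ⟶ Z) (h : Z ⟶ X⟦(1 : ℤ)⟧),
    Triangle.mk f g h ∈ (distTriang D) ∧ Z ∈ U

/-- The essential image `Q A` of a subcategory `A` under a functor `Q`. -/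
def imageSet {E' : Type u₂} [Category.{v₂} E'] (Q : D ⥤ E') (A : Set D) : Set E' :=
  {Y : E' | ∃ X ∈ A, Nonempty (Q.obj X ≅ Y)}


/-! ### Auxiliary machinery for the proof of `local_refinement` -/

section LocalRefinementAux

/-- If all maps `X ⟶ Y⟦l⟧` vanish, then all maps between arbitrary shifts of `X` and `Y`
vanish. -/
lemma orth_shift_src {X Y : D} (h : ∀ (l : ℤ) (f : X ⟶ Y⟦l⟧), f = 0) (a l : ℤ)
    (f : X⟦a⟧ ⟶ Y⟦l⟧) : f = 0 := by
  have key : ((shiftFunctorCompIsoId D a (-a) (by ring)).app X).inv ≫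
      ((shiftFunctor D (-a)).map f ≫ ((shiftFunctorAdd D l (-a)).app Y).inv) = 0 := h _ _
  rw [Preadditive.IsIso.comp_left_eq_zero, Preadditive.IsIso.comp_right_eq_zero] at key
  exact (shiftFunctor D (-a)).map_injective (by rw [key, Functor.map_zero])

/-- Variant of `orth_shift_src` with unshifted target. -/
lemma orth_shift_src₀ {X Y : D} (h : ∀ (l : ℤ) (f : X ⟶ Y⟦l⟧), f = 0) (a : ℤ)
    (f : X⟦a⟧ ⟶ Y) : f = 0 := by
  have h0 := orth_shift_src h a 0 (f ≫ ((shiftFunctorZero D ℤ).app Y).inv)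
  rwa [Preadditive.IsIso.comp_right_eq_zero] at h0

/-- Variant with unshifted source and target. -/
lemma orth_unshift {X Y : D} (h : ∀ (l : ℤ) (f : X ⟶ Y⟦l⟧), f = 0) (f : X ⟶ Y) : f = 0 := by
  have h0 := h 0 (f ≫ ((shiftFunctorZero D ℤ).app Y).inv)
  rwa [Preadditive.IsIso.comp_right_eq_zero] at h0

/-- If all maps `X⟦a⟧ ⟶ Y` vanish then all maps `X⟦a⟧ ⟶ Y⟦k⟧` vanish. -/
lemma orth_shift_tgt {X Y : D} (h : ∀ (a : ℤ) (f : X⟦a⟧ ⟶ Y), f = 0) (a k : ℤ)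
    (f : X⟦a⟧ ⟶ Y⟦k⟧) : f = 0 := by
  have key : ((shiftFunctorAdd D a (-k)).app X).hom ≫
      ((shiftFunctor D (-k)).map f ≫ ((shiftFunctorCompIsoId D k (-k) (by ring)).app Y).hom)
      = 0 := h (a + -k) _
  rw [Preadditive.IsIso.comp_left_eq_zero, Preadditive.IsIso.comp_right_eq_zero] at key
  exact (shiftFunctor D (-k)).map_injective (by rw [key, Functor.map_zero])

/-- Towers: finite filtrations with nonzero subquotients lying in the classes `F φ` with
strictly increasing phases, recorded through the strengthening of the constraint
predicate `c`. -/
inductive TowerG {Φ : Type w} [LT Φ] (F : Φ → Set D) : (Φ → Prop) → D → Prop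
  | zero (c : Φ → Prop) (X : D) (hX : IsZero X) : TowerG F c X
  | cons (c : Φ → Prop) (X V A : D) (φ : Φ) (hφ : c φ) (hA : A ∈ F φ) (hAnz : ¬ IsZero A)
      (f : V ⟶ X) (g : X ⟶ A) (h : A ⟶ V⟦(1 : ℤ)⟧)
      (hT : Triangle.mk f g h ∈ distTriang D)
      (hV : TowerG F (fun φ' => c φ' ∧ φ < φ') V) : TowerG F c X

lemma TowerG.mono {Φ : Type w} [LT Φ] {F : Φ → Set D} {c : Φ → Prop} {X : D}
    (hX : TowerG F c X) : ∀ {c' : Φ → Prop}, (∀ φ, c φ → c' φ) → TowerG F c' X := by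
  induction hX with
  | zero c X h => exact fun _ => .zero _ _ h
  | cons c X V A φ hφ hA hAnz f g h hT hV ih =>
      exact fun hcc => .cons _ _ _ _ _ (hcc _ hφ) hA hAnz f g h hT
        (ih (fun φ' h' => ⟨hcc _ h'.1, h'.2⟩))

/-- Vanishing of maps out of a towered object, given vanishing for all its pieces. -/
lemma TowerG.orth {Φ : Type w} [LT Φ] {F : Φ → Set D} {c : Φ → Prop} {X : D}
    (hX : TowerG F c X) : ∀ {Tgt : D},
      (∀ φ, c φ → ∀ A ∈ F φ, ∀ (l : ℤ) (f : A ⟶ Tgt⟦l⟧), f = 0) →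
      ∀ (l : ℤ) (f : X ⟶ Tgt⟦l⟧), f = 0 := by
  induction hX with
  | zero c X h => exact fun _ l f => h.eq_of_src f 0
  | cons c X V A φ hφ hA hAnz f g h hT hV ih =>
      intro Tgt hp l ff
      obtain ⟨e, he⟩ := Triangle.yoneda_exact₂ _ hT ff
        (ih (fun φ' hφ' => hp _ hφ'.1) l (f ≫ ff))
      rw [he, hp φ hφ A hA l e]; exact comp_zero

/-- Vanishing of maps into a towered object, given vanishing for all its pieces. -/
lemma TowerG.orthIn {Φ : Type w} [LT Φ] {F : Φ → Set D} {c : Φ → Prop} {X : D}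
    (hX : TowerG F c X) : ∀ {Src : D},
      (∀ φ, c φ → ∀ A ∈ F φ, ∀ (a : ℤ) (f : Src⟦a⟧ ⟶ A), f = 0) →
      ∀ (a : ℤ) (f : Src⟦a⟧ ⟶ X), f = 0 := by
  induction hX with
  | zero c X h => exact fun _ a f => h.eq_of_tgt f 0
  | cons c X V A φ hφ hA hAnz f g h hT hV ih =>
      intro Src hp a ff
      obtain ⟨e, he⟩ := Triangle.coyoneda_exact₂ _ hT ff (hp φ hφ A hA a (ff ≫ g))
      rw [he, ih (fun φ' hφ' => hp _ hφ'.1) a e]; exact zero_comp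

/-- A nonzero towered object receives a nonzero map from one of its pieces. -/
lemma TowerG.chain {Φ : Type w} [LT Φ] {F : Φ → Set D} {c : Φ → Prop} {X : D}
    (hX : TowerG F c X) :
    ¬ IsZero X →
    (∀ φ φ', c φ → (c φ' ∧ φ < φ') → ∀ A ∈ F φ, ∀ Tp ∈ F φ',
      ∀ (l : ℤ) (f : Tp ⟶ A⟦l⟧), f = 0) →
    ∃ (φ₀ : Φ) (_ : c φ₀) (Tp : D) (_ : Tp ∈ F φ₀) (mφ : Tp ⟶ X), mφ ≠ 0 := by
  induction hX with
  | zero c X h => exact fun hnz _ => absurd h hnz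
  | cons c X V A φ hφ hA hAnz f g h hT hV ih =>
      intro hnz hcr
      by_cases hV0 : IsZero V
      · have hzero : h = 0 := ((shiftFunctor D (1 : ℤ)).map_isZero hV0).eq_of_tgt h 0
        obtain ⟨s, hs⟩ := Triangle.coyoneda_exact₂ _ (rot_of_distTriang _ hT) (𝟙 A)
          (by dsimp [Triangle.rotate]; rw [hzero]; exact comp_zero)
        refine ⟨φ, hφ, A, hA, s, fun hs0 => hAnz ?_⟩
        rw [IsZero.iff_id_eq_zero, hs, hs0]; exact zero_comp
      · obtain ⟨φ', hφ'c, Tp, hTp, m₁, hm₁⟩ := ih hV0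
          (fun a b ha hb => hcr a b ha.1 ⟨hb.1.1, hb.2⟩)
        refine ⟨φ', hφ'c.1, Tp, hTp, m₁ ≫ f, fun hm0 => hm₁ ?_⟩
        obtain ⟨d, hd⟩ := Triangle.coyoneda_exact₂ _ (inv_rot_of_distTriang _ hT) m₁ hm0
        rw [hd, hcr φ φ' hφ hφ'c A hA Tp hTp (-1) d]; exact zero_comp

/-- Conversion from the `Fin`-packaged Harder–Narasimhan data to a tower. -/
lemma towerG_of_hn {Φ : Type w} [LinearOrder Φ] {F : Φ → Set D} {X : D}
    (hX : HasHNFiltration F X) : TowerG F (fun _ => True) X := by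
  obtain ⟨nn, Y, idx, h0, hlast, hmono, htri⟩ := hX
  suffices h : ∀ j : Fin (nn + 1),
      TowerG F (fun φ => ∃ k : Fin nn, (j : ℕ) ≤ (k : ℕ) ∧ φ = idx k) (Y j) by
    have := (h 0).mono (fun φ _ => trivial)
    rwa [h0] at this
  intro j
  induction j using Fin.reverseInduction with
  | last => exact .zero _ _ hlast
  | cast i ih =>
      obtain ⟨A, f, g, h, hT, hA, hAnz⟩ := htri i
      refine .cons _ _ _ _ (idx i) ⟨i, by simp, rfl⟩ hA hAnz f g h hT (ih.mono ?_)
      rintro φ ⟨k, hk, rfl⟩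
      refine ⟨⟨k, by simpa using Nat.le_of_succ_le hk, rfl⟩, hmono ?_⟩
      have : (i : ℕ) < (k : ℕ) := by
        have hik : ((i.succ : Fin (nn + 1)) : ℕ) = (i : ℕ) + 1 := by simp
        omega
      exact this

/-- Conversion from a tower to `Fin`-packaged Harder–Narasimhan data. -/
lemma TowerG.toHN {Φ : Type w} [LinearOrder Φ] {F : Φ → Set D} {c : Φ → Prop} {X : D}
    (hX : TowerG F c X) :
    ∃ (nn : ℕ) (Y : Fin (nn + 1) → D) (idx : Fin nn → Φ),
      Y 0 = X ∧ IsZero (Y (Fin.last nn)) ∧ StrictMono idx ∧ (∀ i, c (idx i)) ∧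
      ∀ i : Fin nn, ∃ (A : D) (f : Y i.succ ⟶ Y i.castSucc) (g : Y i.castSucc ⟶ A)
        (h : A ⟶ (Y i.succ)⟦(1 : ℤ)⟧),
        Triangle.mk f g h ∈ (distTriang D) ∧ A ∈ F (idx i) ∧ ¬ IsZero A := by
  induction hX with
  | zero c X h =>
      exact ⟨0, fun _ => X, Fin.elim0, rfl, h, fun a => a.elim0, fun a => a.elim0,
        fun a => a.elim0⟩
  | cons c X V A φ hφ hA hAnz f g h hT hV ih =>
      obtain ⟨nV, Yv, idxv, hv0, hvlast, hvmono, hvc, hvtri⟩ := ih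
      have hgt : ∀ k, φ < idxv k := fun k => (hvc k).2
      refine ⟨nV + 1, Fin.cases X Yv, Fin.cases φ idxv, ?_, ?_, ?_, ?_, ?_⟩
      · rfl
      · have hls : (Fin.last (nV + 1)) = (Fin.last nV).succ := (Fin.succ_last nV).symm
        simp only [hls, Fin.cases_succ]
        exact hvlast
      · intro a b hab
        induction b using Fin.cases with
        | zero => exact absurd hab (Fin.not_lt_zero _)
        | succ jb =>
          induction a using Fin.cases with
          | zero => simpa using hgt jb
          | succ ja => simpa using hvmono (by exact_mod_cast Fin.succ_lt_succ_iff.mp hab)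
      · intro i
        induction i using Fin.cases with
        | zero => simpa using hφ
        | succ j => simpa using (hvc j).1
      · intro i
        induction i using Fin.cases with
        | zero =>
            simp only [Fin.cases_succ, Fin.cases_zero, Fin.castSucc_zero]
            rw [hv0]
            exact ⟨A, f, g, h, hT, hA, hAnz⟩
        | succ j =>
            simp only [← Fin.succ_castSucc, Fin.cases_succ]
            exact hvtri j

end LocalRefinementAux

section LocalRefinementAux2

/-- Semistable classes of a t-stability are closed under all shifts. -/
lemma tstab_shift_mem {amb : Set D} {Φ₀ : Type w} [LinearOrder Φ₀] {Fm : Φ₀ → Set D}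
    (hF : IsTStabOn amb Fm) {φ : Φ₀} {Y : D} (hY : Y ∈ Fm φ) (l : ℤ) : Y⟦l⟧ ∈ Fm φ := by
  induction l using Int.induction_on with
  | zero => exact (hF.semistable φ).iso_mem ((shiftFunctorZero D ℤ).app Y).symm hY
  | succ k ih =>
      have h1 : (Y⟦(k : ℤ)⟧)⟦(1 : ℤ)⟧ ∈ Fm φ := (hF.shiftInv φ _).mp ih
      exact (hF.semistable φ).iso_mem
        (((shiftFunctorAdd' D (k : ℤ) 1 ((k : ℤ) + 1) rfl).app Y).symm) h1
  | pred k ih =>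
      refine (hF.shiftInv φ _).mpr ?_
      exact (hF.semistable φ).iso_mem
        ((shiftFunctorAdd' D (-(k : ℤ) - 1) 1 (-(k : ℤ)) (by ring)).app Y) ih

/-- Cross-phase hom vanishing, in all shifts. -/
lemma tstab_hom_all {amb : Set D} {Φ₀ : Type w} [LinearOrder Φ₀] {Fm : Φ₀ → Set D}
    (hF : IsTStabOn amb Fm) {φ' φ'' : Φ₀} (hlt : φ'' < φ') {X Y : D}
    (hX : X ∈ Fm φ') (hY : Y ∈ Fm φ'') (l : ℤ) (f : X ⟶ Y⟦l⟧) : f = 0 := by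
  have h0 := hF.hom φ' φ'' hlt X hX (Y⟦l⟧) (tstab_shift_mem hF hY l) 0 le_rfl
    (f ≫ ((shiftFunctorZero D ℤ).app (Y⟦l⟧)).inv)
  rwa [Preadditive.IsIso.comp_right_eq_zero] at h0

variable {n : ℕ} {P : Fin n → Set D} {m : Fin n → ℕ} {Q : ∀ i : Fin n, Fin (m i) → Set D}

lemma lex_fst_le {a b : Lex (Σ i : Fin n, Fin (m i))} (hab : a ≤ b) :
    (ofLex a).1 ≤ (ofLex b).1 := by
  rcases Sigma.Lex.le_def.mp hab with h1 | ⟨h1, _⟩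
  · exact le_of_lt h1
  · exact le_of_eq h1

lemma lex_lt_fst {a b : Lex (Σ i : Fin n, Fin (m i))} (h : (ofLex a).1 < (ofLex b).1) :
    a < b := Sigma.Lex.lt_def.mpr (Or.inl h)

lemma lex_lt_snd {i : Fin n} {q q' : Fin (m i)} (h : q < q') :
    (toLex ⟨i, q⟩ : Lex (Σ i : Fin n, Fin (m i))) < toLex ⟨i, q'⟩ :=
  Sigma.Lex.lt_def.mpr (Or.inr ⟨rfl, h⟩)

/-- Cross-phase hom vanishing for the glued family, in all shifts. -/
lemma hom_all_R (hP : IsTStabOn Set.univ P) (hQ : ∀ i : Fin n, IsTStabOn (P i) (Q i))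
    {ψ' ψ'' : Lex (Σ i : Fin n, Fin (m i))} (hlt : ψ'' < ψ') {X Y : D}
    (hX : X ∈ Q (ofLex ψ').1 (ofLex ψ').2) (hY : Y ∈ Q (ofLex ψ'').1 (ofLex ψ'').2)
    (l : ℤ) (f : X ⟶ Y⟦l⟧) : f = 0 := by
  rcases hlt with ⟨a, b, hij⟩ | ⟨a, b, hq⟩
  · exact tstab_hom_all hP hij ((hQ _).subset _ hX) ((hQ _).subset _ hY) l f
  · exact tstab_hom_all (hQ _) hq hX hY l f

/-- Zero objects belong to every `P i`. -/
lemma zero_mem_P (hP : IsTStabOn Set.univ P) (i : Fin n) {W : D} (hW : IsZero W) :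
    W ∈ P i := by
  obtain ⟨Y₀, hY₀, hY₀nz⟩ := (hP.semistable i).nonzero
  have h1 : (contractibleTriangle Y₀).rotate ∈ distTriang D :=
    rot_of_distTriang _ (contractible_distinguished Y₀)
  have h0 : (contractibleTriangle Y₀).rotate.obj₂ ∈ P i :=
    (hP.semistable i).ext_mem _ h1 hY₀ (tstab_shift_mem hP hY₀ 1)
  exact (hP.semistable i).iso_mem ((isZero_zero D).iso hW) h0

/-- Each local index set is nonempty. -/
lemma m_pos (hP : IsTStabOn Set.univ P) (hQ : ∀ i : Fin n, IsTStabOn (P i) (Q i))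
    (i : Fin n) : 0 < m i := by
  rcases Nat.eq_zero_or_pos (m i) with h0 | h
  · obtain ⟨X₀, hX₀, hnz⟩ := (hP.semistable i).nonzero
    obtain ⟨nn, Y, idx, hY0, hlast, _, _⟩ := (hQ i).hn X₀ hX₀ hnz
    cases nn with
    | zero => rw [show Fin.last 0 = 0 from rfl, hY0] at hlast; exact absurd hlast hnz
    | succ k =>
        have hidx := idx 0
        rw [h0] at hidx
        exact hidx.elim0
  · exact h

/-- The key one-step peeling lemma: orthogonality of the fibre of `Z ⟶ A ⟶ B`. -/
lemma peel_orth {N Z A A₁ B V : D}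
    (f : N ⟶ Z) (g : Z ⟶ A) (h : A ⟶ N⟦(1 : ℤ)⟧)
    (hT1 : Triangle.mk f g h ∈ distTriang D)
    (f' : A₁ ⟶ A) (g' : A ⟶ B) (h' : B ⟶ A₁⟦(1 : ℤ)⟧)
    (hT2 : Triangle.mk f' g' h' ∈ distTriang D)
    (u : V ⟶ Z) (w : B ⟶ V⟦(1 : ℤ)⟧)
    (hT3 : Triangle.mk u (g ≫ g') w ∈ distTriang D)
    {Tgt : D} (hN : ∀ ff : N ⟶ Tgt, ff = 0) (hA₁ : ∀ ff : A₁ ⟶ Tgt, ff = 0)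
    (φ : V ⟶ Tgt) : φ = 0 := by
  set φ1 := (shiftFunctor D (1 : ℤ)).map φ with hφ1
  have hc23 : (g ≫ g') ≫ w = 0 := comp_distTriang_mor_zero₂₃ _ hT3
  have hχ : g ≫ g' ≫ w ≫ φ1 = 0 := by
    rw [← Category.assoc, ← Category.assoc, hc23, zero_comp]
  obtain ⟨e₂, he₂⟩ := Triangle.yoneda_exact₃ _ hT1 (g' ≫ w ≫ φ1) hχ
  have he₂0 : e₂ = 0 := by
    have hp := hN ((shiftFunctor D (1 : ℤ)).preimage e₂)
    rw [← (shiftFunctor D (1 : ℤ)).map_preimage e₂]; exact (congrArg (shiftFunctor D (1 : ℤ)).map hp).trans (Functor.map_zero _ _ _)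
  have hρg : g' ≫ w ≫ φ1 = 0 := by rw [he₂0] at he₂; exact he₂.trans comp_zero
  obtain ⟨e₃, he₃⟩ := Triangle.yoneda_exact₃ _ hT2 (w ≫ φ1) hρg
  have he₃0 : e₃ = 0 := by
    have hp := hA₁ ((shiftFunctor D (1 : ℤ)).preimage e₃)
    rw [← (shiftFunctor D (1 : ℤ)).map_preimage e₃]; exact (congrArg (shiftFunctor D (1 : ℤ)).map hp).trans (Functor.map_zero _ _ _)
  have hρ : w ≫ φ1 = 0 := by rw [he₃0] at he₃; exact he₃.trans comp_zero
  obtain ⟨e₄, he₄⟩ := Triangle.yoneda_exact₃ _ (rot_of_distTriang _ hT3) φ1 hρ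
  set e₄' : Z ⟶ Tgt := (shiftFunctor D (1 : ℤ)).preimage e₄ with he₄'def
  have hφe : φ = u ≫ (-e₄') := by
    apply (shiftFunctor D (1 : ℤ)).map_injective
    have h1 : (shiftFunctor D (1 : ℤ)).map φ = φ1 := rfl
    have h2 : (shiftFunctor D (1 : ℤ)).map e₄' = e₄ := Functor.map_preimage _ _
    rw [Functor.map_comp, Functor.map_neg]
    exact h1.trans (he₄.trans (by dsimp [Triangle.rotate]; simp only [h2]; exact (Preadditive.neg_comp _ _).trans (Preadditive.comp_neg _ _).symm))
  obtain ⟨phat, hphat⟩ := Triangle.yoneda_exact₂ _ hT1 (-e₄') (hN (f ≫ (-e₄')))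
  obtain ⟨β, hβ⟩ := Triangle.yoneda_exact₂ _ hT2 phat (hA₁ (f' ≫ phat))
  have hu : (u ≫ g) ≫ g' = 0 := by
    have h12 := comp_distTriang_mor_zero₁₂ _ hT3
    exact (Category.assoc u g g').trans h12
  rw [hφe, hphat, hβ]
  show u ≫ g ≫ g' ≫ β = 0
  exact (Category.assoc u g (g' ≫ β)).symm.trans ((Category.assoc (u ≫ g) g' β).symm.trans ((congrArg (· ≫ β) hu).trans zero_comp))

end LocalRefinementAux2

section LocalRefinementAux3

variable {n : ℕ} {P : Fin n → Set D} {m : Fin n → ℕ} {Q : ∀ i : Fin n, Fin (m i) → Set D}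

/-- The core induction: any object which is orthogonal to all semistable classes with
phases outside of the up-set `S` admits a tower with phases in `S`. -/
lemma main_tower (hP : IsTStabOn Set.univ P) (hQ : ∀ i : Fin n, IsTStabOn (P i) (Q i)) :
    ∀ S : Finset (Lex (Σ i : Fin n, Fin (m i))),
      (∀ ⦃a b : Lex (Σ i : Fin n, Fin (m i))⦄, a ∈ S → a ≤ b → b ∈ S) →
      ∀ Z : D,
      (∀ ψ, ψ ∉ S → ∀ (l : ℤ) (Y : D), Y ∈ Q (ofLex ψ).1 (ofLex ψ).2 →
        ∀ f : Z ⟶ Y⟦l⟧, f = 0) →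
      TowerG (fun ψ : Lex (Σ i : Fin n, Fin (m i)) => Q (ofLex ψ).1 (ofLex ψ).2)
        (· ∈ S) Z := by
  intro S
  induction S using Finset.strongInduction with
  | _ S ih =>
    intro hup Z horth
    by_cases hZ : IsZero Z
    · exact .zero _ _ hZ
    have hPt := towerG_of_hn (hP.hn Z trivial hZ)
    cases hPt with
    | zero _ _ hzz => exact absurd hzz hZ
    | cons _ _ N A φb _ hA hAnz f g h hT1 hNt =>
      have hQt := towerG_of_hn ((hQ φb).hn A hA hAnz)
      cases hQt with
      | zero _ _ hzz => exact absurd hzz hAnz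
      | cons _ _ A₁ C₀ q₀ _ hC₀ hC₀nz f' g' h' hT2 hA₁t =>
        set ψA : Lex (Σ i : Fin n, Fin (m i)) := toLex ⟨φb, q₀⟩ with hψAdef
        have hNorth : ∀ (Y : D), (∃ ψ, ψ ≤ ψA ∧ Y ∈ Q (ofLex ψ).1 (ofLex ψ).2) →
            ∀ (l : ℤ) (ff : N ⟶ Y⟦l⟧), ff = 0 := by
          rintro Y ⟨ψ, hψle, hY⟩
          refine hNt.orth ?_
          rintro φ' ⟨-, hφ'⟩ A' hA' l ff
          exact tstab_hom_all hP (lt_of_le_of_lt (lex_fst_le hψle) hφ') hA'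
            ((hQ _).subset _ hY) l ff
        have hA₁orth : ∀ (Y : D), (∃ ψ, ψ ≤ ψA ∧ Y ∈ Q (ofLex ψ).1 (ofLex ψ).2) →
            ∀ (l : ℤ) (ff : A₁ ⟶ Y⟦l⟧), ff = 0 := by
          rintro Y ⟨ψ, hψle, hY⟩
          refine hA₁t.orth ?_
          rintro q' ⟨-, hq'⟩ A' hA' l ff
          exact hom_all_R hP hQ (lt_of_le_of_lt hψle (lex_lt_snd hq')) hA' hY l ff
        have hψAS : ψA ∈ S := by
          by_contra hns
          have hgg' : g ≫ g' = 0 :=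
            orth_unshift (fun l => horth ψA hns l C₀ hC₀) (g ≫ g')
          obtain ⟨e, he⟩ := Triangle.yoneda_exact₃ _ hT1 g' hgg'
          have he0 : e = 0 :=
            orth_shift_src₀ (fun l ff => hNorth C₀ ⟨ψA, le_rfl, hC₀⟩ l ff) 1 e
          have hg'0 : g' = 0 := by rw [he0] at he; exact he.trans comp_zero
          obtain ⟨t, ht⟩ := Triangle.yoneda_exact₃ _ hT2 (𝟙 C₀)
            (by show g' ≫ 𝟙 C₀ = 0; rw [hg'0, zero_comp])
          have ht0 : t = 0 :=
            orth_shift_src₀ (fun l ff => hA₁orth C₀ ⟨ψA, le_rfl, hC₀⟩ l ff) 1 t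
          refine hC₀nz ?_
          rw [IsZero.iff_id_eq_zero, ht, ht0]; exact comp_zero
        obtain ⟨Q3, q3, r3, hT3pre⟩ := distinguished_cocone_triangle (g ≫ g')
        have hT3 := inv_rot_of_distTriang _ hT3pre
        set T3 := (Triangle.mk (g ≫ g') q3 r3).invRotate with hT3def
        set S' := S.filter (fun ψ => ψA < ψ) with hS'def
        have hssub : S' ⊂ S := Finset.filter_ssubset.mpr ⟨ψA, hψAS, lt_irrefl _⟩
        have hup' : ∀ ⦃a b : Lex (Σ i : Fin n, Fin (m i))⦄, a ∈ S' → a ≤ b → b ∈ S' := by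
          intro a b ha hab
          rw [hS'def, Finset.mem_filter] at ha ⊢
          exact ⟨hup ha.1 hab, lt_of_lt_of_le ha.2 hab⟩
        have hV₁orth : ∀ ψ, ψ ∉ S' → ∀ (l : ℤ) (Y : D), Y ∈ Q (ofLex ψ).1 (ofLex ψ).2 →
            ∀ ff : T3.obj₁ ⟶ Y⟦l⟧, ff = 0 := by
          intro ψ hψ l Y hY ff
          have hle : ψ ≤ ψA := by
            by_contra hgt
            have hlt : ψA < ψ := lt_of_not_ge hgt
            refine hψ ?_
            rw [hS'def, Finset.mem_filter]
            exact ⟨hup hψAS (le_of_lt hlt), hlt⟩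
          exact peel_orth f g h hT1 f' g' h' hT2 T3.mor₁ T3.mor₃ hT3
            (hNorth _ ⟨ψ, hle, hY⟩ l) (hA₁orth _ ⟨ψ, hle, hY⟩ l) ff
        have hrec := ih S' hssub hup' T3.obj₁ hV₁orth
        refine TowerG.cons _ _ T3.obj₁ C₀ ψA hψAS hC₀ hC₀nz T3.mor₁ (g ≫ g') T3.mor₃
          hT3 (hrec.mono ?_)
        intro ψ hψ
        rw [hS'def, Finset.mem_filter] at hψ
        exact ⟨hψ.1, hψ.2⟩

end LocalRefinementAux3

section LocalRefinementAux4

variable {n : ℕ} {P : Fin n → Set D} {m : Fin n → ℕ} {Q : ∀ i : Fin n, Fin (m i) → Set D}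

/-- Orthogonally defined candidate for the block `P i` inside the glued t-stability. -/
def Torth (Q : ∀ i : Fin n, Fin (m i) → Set D) (i : Fin n) : Set D :=
  {X : D | (∀ ψ : Lex (Σ i : Fin n, Fin (m i)), (ofLex ψ).1 < i → ∀ (l : ℤ) (Y : D),
      Y ∈ Q (ofLex ψ).1 (ofLex ψ).2 → ∀ f : X ⟶ Y⟦l⟧, f = 0) ∧
    (∀ ψ : Lex (Σ i : Fin n, Fin (m i)), i < (ofLex ψ).1 → ∀ (Y : D),
      Y ∈ Q (ofLex ψ).1 (ofLex ψ).2 → ∀ (a : ℤ) (f : Y⟦a⟧ ⟶ X), f = 0)}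

lemma isTriangClosed_Torth (i : Fin n) : IsTriangClosed (Torth Q i) := by
  constructor
  · exact ⟨fun ψ _ l Y _ f => (isZero_zero D).eq_of_src f 0,
      fun ψ _ Y _ a f => (isZero_zero D).eq_of_tgt f 0⟩
  · rintro X Y e ⟨h1, h2⟩
    constructor
    · intro ψ hψ l Y' hY' f
      have h0 := h1 ψ hψ l Y' hY' (e.hom ≫ f)
      rw [← Iso.inv_hom_id_assoc e f, h0, comp_zero]
    · intro ψ hψ Y' hY' a f
      have h0 := h2 ψ hψ Y' hY' a (f ≫ e.inv)
      calc f = (f ≫ e.inv) ≫ e.hom := by simp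
      _ = 0 := by rw [h0, zero_comp]
  · rintro X ⟨h1, h2⟩ k
    constructor
    · intro ψ hψ l Y hY f
      exact orth_shift_src (fun l' => h1 ψ hψ l' Y hY) k l f
    · intro ψ hψ Y hY a f
      exact orth_shift_tgt (fun a' => h2 ψ hψ Y hY a') a k f
  · rintro T' hT' ⟨h11, h12⟩ ⟨h31, h32⟩
    constructor
    · intro ψ hψ l Y hY f
      obtain ⟨e, he⟩ := Triangle.yoneda_exact₂ _ hT' f (h11 ψ hψ l Y hY (T'.mor₁ ≫ f))
      rw [he, h31 ψ hψ l Y hY e, comp_zero]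
    · intro ψ hψ Y hY a f
      obtain ⟨e, he⟩ := Triangle.coyoneda_exact₂ _ hT' f (h32 ψ hψ Y hY a (f ≫ T'.mor₂))
      rw [he, h12 ψ hψ Y hY a e, zero_comp]
  · rintro X Y s r hsr ⟨h1, h2⟩
    constructor
    · intro ψ hψ l Y' hY' f
      have h0 := h1 ψ hψ l Y' hY' (r ≫ f)
      calc f = (s ≫ r) ≫ f := by rw [hsr, Category.id_comp]
      _ = s ≫ (r ≫ f) := Category.assoc _ _ _
      _ = 0 := by rw [h0, comp_zero]
    · intro ψ hψ Y' hY' a f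
      have h0 := h2 ψ hψ Y' hY' a (f ≫ s)
      calc f = f ≫ (s ≫ r) := by rw [hsr, Category.comp_id]
      _ = (f ≫ s) ≫ r := (Category.assoc _ _ _).symm
      _ = 0 := by rw [h0, zero_comp]

lemma piece_mem_Torth (hP : IsTStabOn Set.univ P)
    (hQ : ∀ i : Fin n, IsTStabOn (P i) (Q i)) (i : Fin n)
    {ψ0 : Lex (Σ i : Fin n, Fin (m i))} (hψ0 : (ofLex ψ0).1 = i) {X : D}
    (hX : X ∈ Q (ofLex ψ0).1 (ofLex ψ0).2) : X ∈ Torth Q i := by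
  constructor
  · intro ψ hψ l Y hY f
    refine hom_all_R hP hQ (lex_lt_fst ?_) hX hY l f
    rw [hψ0]; exact hψ
  · intro ψ hψ Y hY a f
    refine orth_shift_src₀ (fun l ff => hom_all_R hP hQ (lex_lt_fst ?_) hY hX l ff) a f
    rw [hψ0]; exact hψ

lemma isTriangClosed_gen (S : Set D) : IsTriangClosed (gen S) := by
  constructor
  · exact Set.mem_sInter.mpr (fun T hT => hT.1.zero_mem)
  · intro X Y e hX
    exact Set.mem_sInter.mpr (fun T hT => hT.1.iso_mem e (Set.mem_sInter.mp hX T hT))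
  · intro X hX k
    exact Set.mem_sInter.mpr (fun T hT => hT.1.shift_mem X (Set.mem_sInter.mp hX T hT) k)
  · intro T' hT' h1 h3
    exact Set.mem_sInter.mpr (fun T hT => hT.1.ext_mem T' hT'
      (Set.mem_sInter.mp h1 T hT) (Set.mem_sInter.mp h3 T hT))
  · intro X Y s r hsr hX
    exact Set.mem_sInter.mpr (fun T hT => hT.1.summand_mem s r hsr (Set.mem_sInter.mp hX T hT))

lemma subset_gen (S : Set D) : S ⊆ gen S :=
  fun _ hx => Set.mem_sInter.mpr (fun _ hT => hT.2 hx)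

lemma gen_subset {S T : Set D} (hT : IsTriangClosed T) (hST : S ⊆ T) : gen S ⊆ T :=
  fun _ hx => Set.mem_sInter.mp hx T ⟨hT, hST⟩

/-- Saturation: a nonzero object of the orthogonal class `Torth Q i` which carries a tower
for the glued family lies in `P i`. -/
lemma sat (hP : IsTStabOn Set.univ P) (hQ : ∀ i : Fin n, IsTStabOn (P i) (Q i)) (i : Fin n)
    {c : Lex (Σ i : Fin n, Fin (m i)) → Prop} {X : D}
    (hX : TowerG (fun ψ : Lex (Σ i : Fin n, Fin (m i)) => Q (ofLex ψ).1 (ofLex ψ).2) c X) :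
    X ∈ Torth Q i → ¬ IsZero X → X ∈ P i := by
  induction hX with
  | zero c X hz => exact fun _ hnz => absurd hz hnz
  | cons c Xo V A ψh hψc hA hAnz f g h hT hV ih =>
    rintro ⟨hout, hin⟩ hnz
    have h1 : ¬ (ofLex ψh).1 < i := by
      intro hlt
      have hg0 : g = 0 := orth_unshift (fun l ff => hout ψh hlt l A hA ff) g
      obtain ⟨t, ht⟩ := Triangle.yoneda_exact₃ _ hT (𝟙 A)
        (by show g ≫ 𝟙 A = 0; rw [hg0, zero_comp])
      have ht0 : t = 0 := by
        refine orth_shift_src₀ ?_ 1 t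
        refine hV.orth ?_
        rintro φ' ⟨-, hφ'⟩ A' hA' l ff
        exact hom_all_R hP hQ hφ' hA' hA l ff
      exact hAnz (by rw [IsZero.iff_id_eq_zero, ht, ht0]; exact comp_zero)
    have h2 : ¬ i < (ofLex ψh).1 := by
      intro hlt
      have htow : TowerG (fun ψ : Lex (Σ i : Fin n, Fin (m i)) =>
          Q (ofLex ψ).1 (ofLex ψ).2) (fun ψ' => ψh ≤ ψ') Xo :=
        TowerG.cons _ _ _ _ ψh le_rfl hA hAnz f g h hT
          (hV.mono (fun ψ' h' => ⟨le_of_lt h'.2, h'.2⟩))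
      obtain ⟨φ₀, hφ₀, Tp, hTp, mφ, hmφ⟩ := htow.chain hnz
        (fun a b _ hb A' hA' Tp hTp l ff => hom_all_R hP hQ hb.2 hTp hA' l ff)
      have h0 := hin φ₀ (lt_of_lt_of_le hlt (lex_fst_le hφ₀)) Tp hTp 0
        (((shiftFunctorZero D ℤ).app Tp).hom ≫ mφ)
      apply hmφ
      have hm : mφ = ((shiftFunctorZero D ℤ).app Tp).inv ≫
          (((shiftFunctorZero D ℤ).app Tp).hom ≫ mφ) := by simp
      rw [hm, h0, comp_zero]
    have heq : (ofLex ψh).1 = i := le_antisymm (not_lt.mp h2) (not_lt.mp h1)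
    have hAP : A ∈ P i := by
      have hsub := (hQ (ofLex ψh).1).subset (ofLex ψh).2 hA
      rwa [heq] at hsub
    by_cases hVz : IsZero V
    · haveI hiso : IsIso g := (Triangle.isZero₁_iff_isIso₂ _ hT).mp hVz
      exact (hP.semistable i).iso_mem (asIso g).symm hAP
    · have hVT : V ∈ Torth Q i := by
        constructor
        · intro ψ hψ l Y hY ff
          have hcond : (Triangle.mk f g h).invRotate.mor₁ ≫ ff = 0 := by
            refine orth_shift_src (fun l' => hom_all_R hP hQ (lex_lt_fst ?_) hA hY (l := l'))
              (-1) l _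
            rw [heq]; exact hψ
          obtain ⟨e, he⟩ := Triangle.yoneda_exact₂ _ (inv_rot_of_distTriang _ hT) ff hcond
          rw [he, hout ψ hψ l Y hY e]; exact comp_zero
        · intro ψ hψ Y hY a ff
          have hcond : ff ≫ (Triangle.mk f g h).invRotate.mor₂ = 0 :=
            hin ψ hψ Y hY a (ff ≫ f)
          obtain ⟨d, hd⟩ := Triangle.coyoneda_exact₂ _ (inv_rot_of_distTriang _ hT) ff hcond
          have hd0 : d = 0 := by
            refine orth_shift_src (fun l' => hom_all_R hP hQ (lex_lt_fst ?_) hY hA (l := l'))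
              a (-1) d
            rw [heq]; exact hψ
          rw [hd, hd0]; exact zero_comp
      exact (hP.semistable i).ext_mem _ hT (ih hVT hVz) hAP

lemma tower_mem_gen (i : Fin n) {c : Fin (m i) → Prop} {X : D} (ht : TowerG (Q i) c X) :
    X ∈ gen (⋃ φ ∈ {φ : Lex (Σ i : Fin n, Fin (m i)) | (ofLex φ).1 = i},
      Q (ofLex φ).1 (ofLex φ).2) := by
  induction ht with
  | zero c X0 hz0 =>
      exact (isTriangClosed_gen _).iso_mem ((isZero_zero D).iso hz0)
        (isTriangClosed_gen _).zero_mem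
  | cons c X0 V A ψh hψc hA hAnz f g h hT hV ih =>
      refine (isTriangClosed_gen _).ext_mem _ hT ih ?_
      refine subset_gen _ ?_
      exact Set.mem_biUnion (show (toLex ⟨i, ψh⟩ : Lex (Σ i : Fin n, Fin (m i))) ∈
        {φ : Lex (Σ i : Fin n, Fin (m i)) | (ofLex φ).1 = i} from rfl) hA

/-- The blocks of the original t-stability are generated by the glued semistable classes. -/
lemma P_eq_gen (hP : IsTStabOn Set.univ P) (hQ : ∀ i : Fin n, IsTStabOn (P i) (Q i))
    (i : Fin n) :
    P i = gen (⋃ φ ∈ {φ : Lex (Σ i : Fin n, Fin (m i)) | (ofLex φ).1 = i},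
      Q (ofLex φ).1 (ofLex φ).2) := by
  haveI : Fintype (Lex (Σ i : Fin n, Fin (m i))) :=
    inferInstanceAs (Fintype (Σ i : Fin n, Fin (m i)))
  apply Set.Subset.antisymm
  · intro X hX
    by_cases hz : IsZero X
    · exact (isTriangClosed_gen _).iso_mem ((isZero_zero D).iso hz)
        (isTriangClosed_gen _).zero_mem
    · exact tower_mem_gen i (towerG_of_hn ((hQ i).hn X hX hz))
  · intro X hX
    have hXT : X ∈ Torth Q i := by
      refine gen_subset (isTriangClosed_Torth i) ?_ hX
      intro x hx
      obtain ⟨φ, hφ, hxQ⟩ := Set.mem_iUnion₂.mp hx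
      exact piece_mem_Torth hP hQ i hφ hxQ
    by_cases hz : IsZero X
    · exact zero_mem_P hP i hz
    · have htow := main_tower hP hQ Finset.univ (fun a b _ _ => Finset.mem_univ b) X
        (fun ψ hψ => absurd (Finset.mem_univ ψ) hψ)
      exact sat hP hQ i htow hXT hz

end LocalRefinementAux4
/-- Local refinement: given a finite t-stability `(Φ_n, {Π i})` on `D`
and, for each `i`, a (local) finite t-stability `(I i, {P ψ})` on `Π i`, the glued
family indexed by the lexicographically ordered set `Ψ = ⋃ᵢ I i` (with `ψ₂ > ψ₁`
whenever `ψ₁ ∈ I i₁`, `ψ₂ ∈ I i₂`, `i₂ > i₁`) is a finite t-stability on `D` (with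
`τ_Ψ = id`), and it is finer than `(Φ_n, {Π i})`. -/
theorem local_refinement
    (𝕜 : Type w) [Field 𝕜] [IsAlgClosed 𝕜] [CategoryTheory.Linear 𝕜 D] (n : ℕ) (P : Fin n → Set D) (hP : IsTStabOn Set.univ P)
    (m : Fin n → ℕ) (Q : ∀ i : Fin n, Fin (m i) → Set D)
    (hQ : ∀ i : Fin n, IsTStabOn (P i) (Q i)) :
    IsTStabOn Set.univ
        (fun ψ : Lex (Σ i : Fin n, Fin (m i)) => Q (ofLex ψ).1 (ofLex ψ).2) ∧
      Finer (fun ψ : Lex (Σ i : Fin n, Fin (m i)) => Q (ofLex ψ).1 (ofLex ψ).2) P := by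
  haveI : Fintype (Lex (Σ i : Fin n, Fin (m i))) :=
    inferInstanceAs (Fintype (Σ i : Fin n, Fin (m i)))
  constructor
  · refine ⟨?_, ?_, ?_, ?_, ?_⟩
    · exact fun ψ => Set.subset_univ _
    · exact fun ψ => (hQ (ofLex ψ).1).semistable (ofLex ψ).2
    · exact fun ψ X => (hQ (ofLex ψ).1).shiftInv (ofLex ψ).2 X
    · intro ψ' ψ'' hlt X hX Y hY l _ f
      exact hom_all_R hP hQ hlt hX hY l f
    · intro X _ hnz
      have htow := main_tower hP hQ Finset.univ (fun a b _ _ => Finset.mem_univ b) X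
        (fun ψ hψ => absurd (Finset.mem_univ ψ) hψ)
      obtain ⟨nn, Y, idx, h0, hlast, hmono, _, htri⟩ := htow.toHN
      exact ⟨nn, Y, idx, h0, hlast, hmono, htri⟩
  · refine ⟨fun ψ => (ofLex ψ).1, ?_, ?_, ?_⟩
    · exact fun i => ⟨toLex ⟨i, ⟨0, m_pos hP hQ i⟩⟩, rfl⟩
    · intro a b hab
      exact lex_fst_le hab
    · intro i
      exact P_eq_gen hP hQ i

end SODPaper
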